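/- Let n ≥ 4, let a, b : ZMod n → ℝ satisfy a_i ≠ 0, b_i ≠ 0 and 1 + b_{i−1} a_i ≠ 0 for all i, and let λ : ZMod n → ℝ satisfy λ_i λ_{i+1} λ_{i+2} = −1/(1 + b_{i−1} a_i) for all i. Define the corner invariants x_i := a_{i−2}/(b_{i−2} b_{i−1}) and y_i := −b_{i−1}/(a_{i−2} a_{i−1}), set T*a_i := λ_{i+4} a_{i+2}/λ_{i+2} and T*b_i := λ_i b_{i−1}/λ_{i+2}, and let T*x_i := T*a_{i−2}/(T*b_{i−2} · T*b_{i−1}) and T*y_i := −T*b_{i−1}/(T*a_{i−2} · T*a_{i−1}). Then for all i ∈ ZMod n, 1 − x_i y_i ≠ 0, and T*x_i = x_i (1 − x_{i−1} y_{i−1})/(1 − x_{i+1} y_{i+1}) and T*y_i = y_{i+1} (1 − x_{i+2} y_{i+2})/(1 − x_i y_i). -/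

import Mathlib

/-!
Write `P i = λ_i λ_{i+1} λ_{i+2}`. The hypothesis on `λ` says `P i (1 + b_{i-1} a_i) = -1`,
and `1 + b_{i-1} a_i = b_{i-1} a_i (1 - x_{i+1} y_{i+1})`. Substituting the definitions, `T*x_i` is
`a_i / (b_{i-3} b_{i-2})` times `P i / P (i-2)`, and `T*y_i` is `-b_{i-2} / (a_i a_{i+1})` times
`P (i-1) / P (i+1)`; the relation turns these ratios of `P` into ratios of the factors `1 - x y`.
-/

namespace Pentagram

variable {R K : Type*} [CommRing R] [Field K] {a b lam Ta Tb Tx Ty x y : R → K}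

/-- Kept as a constant so that it stays an atom (with a nonvanishing lemma usable at any index)
when `ring_nf` normalises the shifted indices below. -/
def crossFactor (a b : R → K) (i : R) : K := 1 + b (i - 1) * a i

theorem lam_ne_zero (h : ∀ i, lam i * lam (i + 1) * lam (i + 2) * crossFactor a b i = -1)
    (j : R) : lam j ≠ 0 := by
  intro hj
  simpa [hj] using h j

theorem crossFactor_ne_zero (h : ∀ i, lam i * lam (i + 1) * lam (i + 2) * crossFactor a b i = -1)
    (j : R) : crossFactor a b j ≠ 0 := by
  intro hj
  simpa [hj] using h j

theorem lam_mul_lam_mul_crossFactor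
    (h : ∀ i, lam i * lam (i + 1) * lam (i + 2) * crossFactor a b i = -1) (j : R) :
    lam j * lam (j + 1) * crossFactor a b j =
      lam (j + 3) * lam (j + 4) * crossFactor a b (j + 2) := by
  have h₀ := h j
  have h₂ := h (j + 2)
  refine mul_left_cancel₀ (lam_ne_zero h (j + 2)) ?_
  ring_nf at h₀ h₂ ⊢
  linear_combination h₀ - h₂

theorem one_sub_mul_eq (ha : ∀ i, a i ≠ 0) (hb : ∀ i, b i ≠ 0)
    (hx : ∀ i, x i = a (i - 2) / (b (i - 2) * b (i - 1)))
    (hy : ∀ i, y i = -b (i - 1) / (a (i - 2) * a (i - 1))) (i : R) :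
    1 - x i * y i = crossFactor a b (i - 1) / (b (i - 2) * a (i - 1)) := by
  rw [hx, hy, crossFactor, show i - 1 - 1 = i - 2 by ring]
  field_simp [ha, hb]
  ring

theorem Tx_eq (ha : ∀ i, a i ≠ 0) (hb : ∀ i, b i ≠ 0)
    (h : ∀ i, lam i * lam (i + 1) * lam (i + 2) * crossFactor a b i = -1)
    (hx : ∀ i, x i = a (i - 2) / (b (i - 2) * b (i - 1)))
    (hy : ∀ i, y i = -b (i - 1) / (a (i - 2) * a (i - 1)))
    (hTa : ∀ i, Ta i = lam (i + 4) * a (i + 2) / lam (i + 2))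
    (hTb : ∀ i, Tb i = lam i * b (i - 1) / lam (i + 2))
    (hTx : ∀ i, Tx i = Ta (i - 2) / (Tb (i - 2) * Tb (i - 1))) (i : R) :
    Tx i = x i * (1 - x (i - 1) * y (i - 1)) / (1 - x (i + 1) * y (i + 1)) := by
  have hP := lam_mul_lam_mul_crossFactor h (i - 2)
  rw [hTx, hTa, hTb, hTb, hx, one_sub_mul_eq ha hb hx hy, one_sub_mul_eq ha hb hx hy]
  ring_nf at hP ⊢
  field_simp [ha, hb, lam_ne_zero h, crossFactor_ne_zero h]
  linear_combination -hP

theorem Ty_eq (ha : ∀ i, a i ≠ 0) (hb : ∀ i, b i ≠ 0)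
    (h : ∀ i, lam i * lam (i + 1) * lam (i + 2) * crossFactor a b i = -1)
    (hx : ∀ i, x i = a (i - 2) / (b (i - 2) * b (i - 1)))
    (hy : ∀ i, y i = -b (i - 1) / (a (i - 2) * a (i - 1)))
    (hTa : ∀ i, Ta i = lam (i + 4) * a (i + 2) / lam (i + 2))
    (hTb : ∀ i, Tb i = lam i * b (i - 1) / lam (i + 2))
    (hTy : ∀ i, Ty i = -Tb (i - 1) / (Ta (i - 2) * Ta (i - 1))) (i : R) :
    Ty i = y (i + 1) * (1 - x (i + 2) * y (i + 2)) / (1 - x i * y i) := by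
  have hP := lam_mul_lam_mul_crossFactor h (i - 1)
  rw [hTy, hTa, hTa, hTb, hy, one_sub_mul_eq ha hb hx hy, one_sub_mul_eq ha hb hx hy]
  ring_nf at hP ⊢
  field_simp [ha, hb, lam_ne_zero h, crossFactor_ne_zero h]
  linear_combination -hP

end Pentagram

theorem stmt_15 (n : ℕ)
    (a b lam : ZMod n → ℝ)
    (ha : ∀ i, a i ≠ 0) (hb : ∀ i, b i ≠ 0)
    (hba : ∀ i : ZMod n, 1 + b (i - 1) * a i ≠ 0)
    (hlam : ∀ i : ZMod n, lam i * lam (i + 1) * lam (i + 2) = -1 / (1 + b (i - 1) * a i))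
    (x y Ta Tb Tx Ty : ZMod n → ℝ)
    (hx : ∀ i, x i = a (i - 2) / (b (i - 2) * b (i - 1)))
    (hy : ∀ i, y i = -b (i - 1) / (a (i - 2) * a (i - 1)))
    (hTa : ∀ i, Ta i = lam (i + 4) * a (i + 2) / lam (i + 2))
    (hTb : ∀ i, Tb i = lam i * b (i - 1) / lam (i + 2))
    (hTx : ∀ i, Tx i = Ta (i - 2) / (Tb (i - 2) * Tb (i - 1)))
    (hTy : ∀ i, Ty i = -Tb (i - 1) / (Ta (i - 2) * Ta (i - 1))) :
    ∀ i : ZMod n,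
      1 - x i * y i ≠ 0 ∧
      Tx i = x i * (1 - x (i - 1) * y (i - 1)) / (1 - x (i + 1) * y (i + 1)) ∧
      Ty i = y (i + 1) * (1 - x (i + 2) * y (i + 2)) / (1 - x i * y i) := by
  have h : ∀ i, lam i * lam (i + 1) * lam (i + 2) * Pentagram.crossFactor a b i = -1 :=
    fun i => by rw [Pentagram.crossFactor, hlam i, div_mul_cancel₀ _ (hba i)]
  intro i
  refine ⟨?_, Pentagram.Tx_eq ha hb h hx hy hTa hTb hTx i,
    Pentagram.Ty_eq ha hb h hx hy hTa hTb hTy i⟩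
  rw [Pentagram.one_sub_mul_eq ha hb hx hy]
  exact div_ne_zero (Pentagram.crossFactor_ne_zero h _) (mul_ne_zero (hb _) (ha _))
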